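/- arXiv:1509.01752 — 3 statements merged into one kernel-verified Lean document; each statement's English description precedes it below -/
import Mathlib

section
/- For every positive integer d, Σ_{d'∣d} |μ(d/d')| · d' ≤ φ(d) · 3^{ω(d)}, where ω(d) is the number of distinct prime factors of d. -/
/-!
Both sides are multiplicative functions of `d` (the left one is the Dirichlet convolution
`|μ| * id`), so it suffices to compare them at a prime power `p ^ (k + 1)`. There the left side
is `p ^ (k + 1) + p ^ k = (p + 1) p ^ k`, since `|μ|` vanishes on `p ^ j` for `j ≥ 2`, while the
right side is `3 (p - 1) p ^ k`; and `p + 1 ≤ 3 (p - 1)` for `p ≥ 2`.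
-/

namespace ArithmeticFunction

open Finset
open scoped ArithmeticFunction.Moebius

theorem IsMultiplicative.le_of_forall_prime_pow_le {R : Type*} [CommSemiring R] [PartialOrder R]
    [IsOrderedRing R] [CanonicallyOrderedAdd R] {f g : ArithmeticFunction R}
    (hf : f.IsMultiplicative) (hg : g.IsMultiplicative)
    (h : ∀ p k : ℕ, p.Prime → k ≠ 0 → f (p ^ k) ≤ g (p ^ k)) (n : ℕ) :
    f n ≤ g n := by
  rcases eq_or_ne n 0 with rfl | hn
  · simp
  rw [hf.multiplicative_factorization f hn, hg.multiplicative_factorization g hn,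
    Nat.prod_factorization_eq_prod_primeFactors, Nat.prod_factorization_eq_prod_primeFactors]
  refine prod_le_prod (fun _ _ => zero_le) fun p hp => ?_
  have hp' := Nat.prime_of_mem_primeFactors hp
  exact h p _ hp' (hp'.factorization_pos_of_dvd hn (Nat.dvd_of_mem_primeFactors hp)).ne'

noncomputable def absMoebius : ArithmeticFunction ℕ :=
  ⟨fun n => (μ n).natAbs, by simp⟩

theorem absMoebius_apply (n : ℕ) : absMoebius n = (μ n).natAbs := rfl

theorem isMultiplicative_absMoebius : absMoebius.IsMultiplicative :=
  ⟨by simp [absMoebius_apply],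
    fun h => by
      simp [absMoebius_apply, isMultiplicative_moebius.map_mul_of_coprime h, Int.natAbs_mul]⟩

theorem absMoebius_mul_apply (f : ArithmeticFunction ℕ) (n : ℕ) :
    (absMoebius * f) n = ∑ d ∈ n.divisors, (μ (n / d)).natAbs * f d :=
  (mul_apply ..).trans (Nat.sum_divisorsAntidiagonal' fun a b => absMoebius a * f b)

theorem absMoebius_apply_prime {p : ℕ} (hp : p.Prime) : absMoebius p = 1 := by
  simp [absMoebius_apply, moebius_apply_prime hp]

theorem absMoebius_apply_prime_pow_add_two {p : ℕ} (hp : p.Prime) (k : ℕ) :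
    absMoebius (p ^ (k + 2)) = 0 := by
  simp [absMoebius_apply, moebius_apply_prime_pow hp (show k + 2 ≠ 0 by lia)]

theorem absMoebius_mul_apply_prime_pow_succ (f : ArithmeticFunction ℕ) {p : ℕ} (hp : p.Prime)
    (k : ℕ) : (absMoebius * f) (p ^ (k + 1)) = f (p ^ (k + 1)) + f (p ^ k) := by
  rw [mul_apply, Nat.sum_divisorsAntidiagonal (fun a b => absMoebius a * f b),
    Nat.sum_divisors_prime_pow hp, sum_range_succ', sum_range_succ']
  simp only [absMoebius_apply_prime_pow_add_two hp, zero_mul, sum_const_zero, zero_add]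
  simp only [absMoebius_apply_prime hp, pow_zero, isMultiplicative_absMoebius.map_one, one_mul,
    Nat.div_one, pow_succ, Nat.mul_div_cancel _ hp.pos]
  exact add_comm _ _

noncomputable def totientMulPowCardPrimeFactors (c : ℕ) : ArithmeticFunction ℕ :=
  ⟨fun n => n.totient * c ^ n.primeFactors.card, by simp⟩

theorem totientMulPowCardPrimeFactors_apply (c n : ℕ) :
    totientMulPowCardPrimeFactors c n = n.totient * c ^ n.primeFactors.card := rfl

theorem isMultiplicative_totientMulPowCardPrimeFactors (c : ℕ) :
    (totientMulPowCardPrimeFactors c).IsMultiplicative := by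
  refine ⟨by simp [totientMulPowCardPrimeFactors_apply], fun {m n} h => ?_⟩
  simp only [totientMulPowCardPrimeFactors_apply, Nat.totient_mul h, h.primeFactors_mul,
    card_union_of_disjoint h.disjoint_primeFactors, pow_add]
  ring

theorem totientMulPowCardPrimeFactors_apply_prime_pow_succ (c : ℕ) {p : ℕ} (hp : p.Prime)
    (k : ℕ) :
    totientMulPowCardPrimeFactors c (p ^ (k + 1)) = p ^ k * (p - 1) * c := by
  simp [totientMulPowCardPrimeFactors_apply, Nat.totient_prime_pow_succ hp,
    Nat.primeFactors_prime_pow k.succ_ne_zero hp]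

end ArithmeticFunction

theorem Nat.pow_succ_add_pow_le_pow_mul_sub_one_mul_three {p : ℕ} (hp : 2 ≤ p) (k : ℕ) :
    p ^ (k + 1) + p ^ k ≤ p ^ k * (p - 1) * 3 := by
  have hpk : p ^ (k + 1) + p ^ k = p ^ k * (p + 1) := by ring
  rw [hpk, mul_assoc]
  exact Nat.mul_le_mul_left _ (by lia)

theorem sum_moebius_divisor_le_general (d : ℕ) :
    ∑ d' ∈ d.divisors, (ArithmeticFunction.moebius (d / d')).natAbs * d' ≤
      Nat.totient d * 3 ^ d.primeFactors.card := by
  have hpow : ∀ p k : ℕ, p.Prime → k ≠ 0 →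
      (ArithmeticFunction.absMoebius * ArithmeticFunction.id) (p ^ k) ≤
        ArithmeticFunction.totientMulPowCardPrimeFactors 3 (p ^ k) := by
    rintro p (_ | k) hp hk
    · contradiction
    rw [ArithmeticFunction.absMoebius_mul_apply_prime_pow_succ _ hp,
      ArithmeticFunction.totientMulPowCardPrimeFactors_apply_prime_pow_succ _ hp]
    exact Nat.pow_succ_add_pow_le_pow_mul_sub_one_mul_three hp.two_le k
  simpa only [ArithmeticFunction.absMoebius_mul_apply, ArithmeticFunction.id_apply,
      ArithmeticFunction.totientMulPowCardPrimeFactors_apply] using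
    (ArithmeticFunction.isMultiplicative_absMoebius.mul
      ArithmeticFunction.isMultiplicative_id).le_of_forall_prime_pow_le
      (ArithmeticFunction.isMultiplicative_totientMulPowCardPrimeFactors 3) hpow d

theorem sum_moebius_divisor_le (d : ℕ) (hd : 0 < d) :
    ∑ d' ∈ d.divisors, (ArithmeticFunction.moebius (d / d')).natAbs * d' ≤
      Nat.totient d * 3 ^ d.primeFactors.card :=
  sum_moebius_divisor_le_general d
end

section
/- There is a constant K > 0 such that for all real t ≥ 2, Σ_{d ≤ t} 3^{ω(d)} ≤ K · t · (log t)^2. -/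
/-!
Each `d` has at least `3 ^ ω(d)` ordered pairs `(a, b)` with `a * b ∣ d`: distribute each prime
factor of `d` to `a`, to `b`, or to neither. Swapping the order of summation,
`∑_{d ≤ n} #{(a, b) : a * b ∣ d} = ∑_{a, b ≤ n} ⌊n / (a b)⌋ ≤ n H_n²`, and `H_n ≤ 1 + log n`.
-/

open Finset Real

theorem Finset.card_sigma_powerset_powerset {α : Type*} (s : Finset α) :
    #(s.powerset.sigma fun A => A.powerset) = 3 ^ #s := by
  rw [card_sigma]
  simpa [card_powerset] using sum_pow_mul_eq_add_pow (2 : ℕ) 1 s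

theorem Nat.prod_injOn_primes :
    Set.InjOn (fun s : Finset ℕ => ∏ p ∈ s, p) {s | ∀ p ∈ s, p.Prime} := by
  intro s hs t ht hst
  rw [← Nat.primeFactors_prod hs, ← Nat.primeFactors_prod ht]
  exact congrArg Nat.primeFactors hst

theorem Nat.three_pow_card_primeFactors_le {d : ℕ} (hd : d ≠ 0) :
    3 ^ #d.primeFactors ≤ #{ab ∈ d.divisors ×ˢ d.divisors | ab.1 * ab.2 ∣ d} := by
  have hprime : ∀ s ⊆ d.primeFactors, ∀ p ∈ s, p.Prime := fun s hs p hp =>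
    Nat.prime_of_mem_primeFactors (hs hp)
  rw [← card_sigma_powerset_powerset]
  -- The primes of `B` go to `a`, those of `A \ B` to `b`, and those outside `A` to neither.
  refine card_le_card_of_injOn (fun x => (∏ p ∈ x.2, p, ∏ p ∈ x.1 \ x.2, p)) ?_ ?_
  · rintro ⟨A, B⟩ hAB
    simp only [coe_sigma, Set.mem_sigma_iff, coe_powerset, Set.mem_preimage, Set.mem_powerset_iff,
      coe_subset] at hAB
    have hdvd : (∏ p ∈ B, p) * ∏ p ∈ A \ B, p ∣ d := by
      rw [← prod_union disjoint_sdiff, union_sdiff_of_subset hAB.2]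
      exact (prod_dvd_prod_of_subset _ _ _ hAB.1).trans (Nat.prod_primeFactors_dvd d)
    simp only [coe_filter, Set.mem_ofPred_eq, mem_product, Nat.mem_divisors]
    exact ⟨⟨⟨dvd_of_mul_right_dvd hdvd, hd⟩, ⟨dvd_of_mul_left_dvd hdvd, hd⟩⟩, hdvd⟩
  · rintro ⟨A, B⟩ hAB ⟨A', B'⟩ hAB' h
    simp only [coe_sigma, Set.mem_sigma_iff, coe_powerset, Set.mem_preimage, Set.mem_powerset_iff,
      coe_subset, Prod.mk.injEq] at hAB hAB' h
    have hB : B = B' := prod_injOn_primes (hprime _ (hAB.2.trans hAB.1))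
      (hprime _ (hAB'.2.trans hAB'.1)) h.1
    have hD : A \ B = A' \ B' := prod_injOn_primes (hprime _ (sdiff_subset.trans hAB.1))
      (hprime _ (sdiff_subset.trans hAB'.1)) h.2
    have hA : A = A' := by
      rw [← union_sdiff_of_subset hAB.2, hD, hB, union_sdiff_of_subset hAB'.2]
    subst hA hB
    rfl

theorem Nat.sum_card_mul_dvd_eq (n : ℕ) :
    ∑ d ∈ Icc 1 n, #{ab ∈ Icc 1 n ×ˢ Icc 1 n | ab.1 * ab.2 ∣ d} =
      ∑ ab ∈ Icc 1 n ×ˢ Icc 1 n, n / (ab.1 * ab.2) := by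
  simp_rw [card_filter]
  rw [sum_comm]
  refine sum_congr rfl fun ab _ => ?_
  rw [← card_filter, ← Nat.Ioc_filter_dvd_card_eq_div, ← Icc_add_one_left_eq_Ioc]
  rfl

theorem sum_three_pow_card_primeFactors_le (n : ℕ) :
    ∑ d ∈ Icc 1 n, (3 : ℝ) ^ #d.primeFactors ≤ n * harmonic n ^ 2 := by
  have hH : (harmonic n : ℝ) = ∑ a ∈ Icc 1 n, (a : ℝ)⁻¹ := by
    rw [harmonic_eq_sum_Icc]
    push_cast
    rfl
  calc ∑ d ∈ Icc 1 n, (3 : ℝ) ^ #d.primeFactors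
      ≤ ∑ d ∈ Icc 1 n, (#{ab ∈ Icc 1 n ×ˢ Icc 1 n | ab.1 * ab.2 ∣ d} : ℝ) := by
        refine sum_le_sum fun d hd => ?_
        obtain ⟨hd1, hdn⟩ := mem_Icc.mp hd
        have hdiv : d.divisors ⊆ Icc 1 n := fun a ha => mem_Icc.mpr
          ⟨Nat.pos_of_mem_divisors ha, (Nat.divisor_le ha).trans hdn⟩
        exact_mod_cast (Nat.three_pow_card_primeFactors_le (by omega)).trans
          (card_le_card (filter_subset_filter _ (product_subset_product hdiv hdiv)))
    _ = ∑ ab ∈ Icc 1 n ×ˢ Icc 1 n, ((n / (ab.1 * ab.2) : ℕ) : ℝ) := by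
        exact_mod_cast Nat.sum_card_mul_dvd_eq n
    _ ≤ ∑ ab ∈ Icc 1 n ×ˢ Icc 1 n, n * ((ab.1 : ℝ)⁻¹ * (ab.2 : ℝ)⁻¹) := by
        refine sum_le_sum fun ab _ => Nat.cast_div_le.trans_eq ?_
        push_cast
        rw [div_eq_mul_inv, mul_inv]
    _ = n * harmonic n ^ 2 := by
        rw [← mul_sum, sum_product, hH, sq, sum_mul_sum]

theorem harmonic_floor_le_three_mul_log {t : ℝ} (ht : 2 ≤ t) :
    (harmonic ⌊t⌋₊ : ℝ) ≤ 3 * log t := by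
  have hlog2 : 1 / 2 < log 2 := by linarith [log_two_gt_d9]
  have hlogt : log 2 ≤ log t := log_le_log (by norm_num) ht
  linarith [harmonic_floor_le_one_add_log t (by linarith)]

theorem sum_three_pow_omega_le :
    ∃ K : ℝ, 0 < K ∧ ∀ t : ℝ, 2 ≤ t →
      ∑ d ∈ Finset.Icc 1 ⌊t⌋₊, (3 : ℝ) ^ d.primeFactors.card ≤
        K * t * (Real.log t) ^ 2 := by
  refine ⟨9, by norm_num, fun t ht => ?_⟩
  calc ∑ d ∈ Icc 1 ⌊t⌋₊, (3 : ℝ) ^ #d.primeFactors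
      ≤ ⌊t⌋₊ * (harmonic ⌊t⌋₊ : ℝ) ^ 2 := sum_three_pow_card_primeFactors_le _
    _ ≤ t * (3 * log t) ^ 2 := by
        gcongr
        · exact Nat.floor_le (by linarith)
        · exact_mod_cast (harmonic_pos (Nat.floor_pos.mpr (by linarith : (1 : ℝ) ≤ t)).ne').le
        · exact harmonic_floor_le_three_mul_log ht
    _ = 9 * t * log t ^ 2 := by ring
end

section
/- The series Σ_{k=1}^∞ (μ(k)/k^2) · ∏_{p∣k} (1 + (p-1)/(p^2 - p + 1)) converges absolutely and its sum equals ζ(6)/(ζ(2)ζ(3)). -/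
/-!
The summand `f` is multiplicative and supported on squarefree numbers, and since
`1 + (p - 1) / (p² - p + 1) = p² / (p² - p + 1)` it takes the value `f p = -1 / (p² - p + 1)`
at a prime. Each factor of the product is at most `4 / 3 ≤ √p`, so `|f k| ≤ √k / k²` and the
series converges absolutely. Its Euler factor `1 + f p = p (p - 1) / (p² - p + 1)` equals
`(1 - p⁻²) (1 - p⁻³) / (1 - p⁻⁶)` because `p⁶ - 1 = (p³ - 1) (p + 1) (p² - p + 1)`, and these
are the Euler factors of `ζ(6) / (ζ(2) ζ(3))`.
-/

open ArithmeticFunction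

lemma sq_sub_add_one_pos (x : ℝ) : 0 < x ^ 2 - x + 1 := by
  nlinarith [sq_nonneg (x - 1 / 2)]

lemma one_add_div_sq_sub_add_one {K : Type*} [Field K] {x : K} (hx : x ^ 2 - x + 1 ≠ 0) :
    1 + (x - 1) / (x ^ 2 - x + 1) = x ^ 2 / (x ^ 2 - x + 1) := by
  rw [eq_div_iff hx, add_mul, div_mul_cancel₀ _ hx]
  ring

lemma one_add_div_sq_sub_add_one_nonneg (x : ℝ) : 0 ≤ 1 + (x - 1) / (x ^ 2 - x + 1) := by
  rw [one_add_div_sq_sub_add_one (sq_sub_add_one_pos x).ne']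
  exact div_nonneg (sq_nonneg x) (sq_sub_add_one_pos x).le

lemma one_add_div_sq_sub_add_one_le_sqrt {x : ℝ} (hx : 2 ≤ x) :
    1 + (x - 1) / (x ^ 2 - x + 1) ≤ √x := by
  have hpos := sq_sub_add_one_pos x
  have h_le : x ^ 2 / (x ^ 2 - x + 1) ≤ 4 / 3 := by
    rw [div_le_iff₀ hpos]
    nlinarith [sq_nonneg (x - 2)]
  have h_sqrt : 4 / 3 ≤ √x := Real.le_sqrt_of_sq_le (by nlinarith)
  rw [one_add_div_sq_sub_add_one hpos.ne']
  linarith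

noncomputable def titchmarshTerm (k : ℕ) : ℝ :=
  (moebius k : ℝ) / (k : ℝ) ^ 2 *
    ∏ p ∈ k.primeFactors, (1 + ((p : ℝ) - 1) / ((p : ℝ) ^ 2 - p + 1))

lemma titchmarshTerm_zero : titchmarshTerm 0 = 0 := by simp [titchmarshTerm]

lemma titchmarshTerm_one : titchmarshTerm 1 = 1 := by simp [titchmarshTerm]

lemma titchmarshTerm_mul {m n : ℕ} (h : m.Coprime n) :
    titchmarshTerm (m * n) = titchmarshTerm m * titchmarshTerm n := by
  rw [titchmarshTerm, titchmarshTerm, titchmarshTerm, h.primeFactors_mul,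
    Finset.prod_union h.disjoint_primeFactors, isMultiplicative_moebius.map_mul_of_coprime h]
  push_cast
  ring

lemma titchmarshTerm_prime {p : ℕ} (hp : p.Prime) :
    titchmarshTerm p = -((p : ℝ) ^ 2 - p + 1)⁻¹ := by
  have hpos := sq_sub_add_one_pos p
  rw [titchmarshTerm, moebius_apply_prime hp, hp.primeFactors, Finset.prod_singleton,
    one_add_div_sq_sub_add_one hpos.ne']
  have hp0 : (p : ℝ) ≠ 0 := by exact_mod_cast hp.ne_zero
  field_simp
  push_cast
  ring

lemma titchmarshTerm_prime_pow {p e : ℕ} (hp : p.Prime) (he : 2 ≤ e) :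
    titchmarshTerm (p ^ e) = 0 := by
  have : ¬ Squarefree (p ^ e) := by
    rw [Nat.squarefree_pow_iff hp.ne_one (by omega)]
    omega
  simp [titchmarshTerm, moebius_eq_zero_of_not_squarefree this]

lemma abs_titchmarshTerm_le (k : ℕ) : |titchmarshTerm k| ≤ √k / (k : ℝ) ^ 2 := by
  rcases k.eq_zero_or_pos with rfl | hk
  · simp [titchmarshTerm_zero]
  have h_prod : ∏ p ∈ k.primeFactors, (1 + ((p : ℝ) - 1) / ((p : ℝ) ^ 2 - p + 1)) ≤ √k :=
    calc _ ≤ ∏ p ∈ k.primeFactors, √(p : ℝ) :=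
          Finset.prod_le_prod (fun p _ ↦ one_add_div_sq_sub_add_one_nonneg p)
            fun p hp ↦ one_add_div_sq_sub_add_one_le_sqrt
              (by exact_mod_cast (Nat.prime_of_mem_primeFactors hp).two_le)
      _ = √(∏ p ∈ k.primeFactors, (p : ℝ)) := (Real.sqrt_prod _ fun p _ ↦ p.cast_nonneg).symm
      _ ≤ √k := by
          rw [← Nat.cast_prod]
          gcongr
          exact Nat.le_of_dvd hk k.prod_primeFactors_dvd
  have h_prod_nonneg : 0 ≤ ∏ p ∈ k.primeFactors, (1 + ((p : ℝ) - 1) / ((p : ℝ) ^ 2 - p + 1)) :=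
    Finset.prod_nonneg fun p _ ↦ one_add_div_sq_sub_add_one_nonneg p
  rw [titchmarshTerm, abs_mul, abs_div, abs_of_nonneg h_prod_nonneg,
    abs_of_nonneg (by positivity : (0 : ℝ) ≤ (k : ℝ) ^ 2)]
  calc |(moebius k : ℝ)| / (k : ℝ) ^ 2 * _ ≤ 1 / (k : ℝ) ^ 2 * √k := by
        gcongr
        exact_mod_cast abs_moebius_le_one
    _ = √k / (k : ℝ) ^ 2 := by ring

lemma summable_sqrt_div_sq : Summable fun k : ℕ ↦ √k / (k : ℝ) ^ 2 := by
  refine (Real.summable_nat_rpow_inv.mpr (by norm_num : (1 : ℝ) < 3 / 2)).congr fun k ↦ ?_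
  rcases k.eq_zero_or_pos with rfl | hk
  · simp
  rw [Real.sqrt_eq_rpow, ← Real.rpow_natCast, ← Real.rpow_sub (by exact_mod_cast hk),
    ← Real.rpow_neg (k.cast_nonneg)]
  norm_num

lemma summable_abs_titchmarshTerm : Summable fun k ↦ |titchmarshTerm k| :=
  .of_nonneg_of_le (fun _ ↦ abs_nonneg _) abs_titchmarshTerm_le summable_sqrt_div_sq

lemma titchmarshTerm_eulerProduct_hasProd :
    HasProd (fun p : Nat.Primes ↦ 1 - (((p : ℂ) ^ 2 - p + 1)⁻¹))
      (∑' k, (titchmarshTerm k : ℂ)) := by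
  have h := EulerProduct.eulerProduct_hasProd (f := fun k ↦ (titchmarshTerm k : ℂ))
    (by simp [titchmarshTerm_one]) (fun h ↦ by simp [titchmarshTerm_mul h])
    (by simpa using summable_abs_titchmarshTerm) (by simp [titchmarshTerm_zero])
  convert h using 2 with p
  rw [tsum_eq_sum (s := {0, 1}) fun e he ↦ ?_]
  · simp [titchmarshTerm_one, titchmarshTerm_prime p.prop, sub_eq_add_neg]
  · simp only [Finset.mem_insert, Finset.mem_singleton, not_or] at he
    simp [titchmarshTerm_prime_pow p.prop (by omega : 2 ≤ e)]

lemma euler_factor_identity_two_three_six {K : Type*} [Field K] {x : K} (hx : x ≠ 0)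
    (h6 : x ^ 6 ≠ 1) :
    (1 - (x ^ 2)⁻¹)⁻¹ * (1 - (x ^ 3)⁻¹)⁻¹ * (1 - (x ^ 2 - x + 1)⁻¹) = (1 - (x ^ 6)⁻¹)⁻¹ := by
  have h6' : x ^ 6 - 1 ≠ 0 := sub_ne_zero.mpr h6
  have h2 : x ^ 2 - 1 ≠ 0 := fun h ↦ h6' (by linear_combination (x ^ 4 + x ^ 2 + 1) * h)
  have h3 : x ^ 3 - 1 ≠ 0 := fun h ↦ h6' (by linear_combination (x ^ 3 + 1) * h)
  -- `x * (x - 1) + 1` is the form in which `field_simp` looks for `x ^ 2 - x + 1 ≠ 0`.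
  have hq : x * (x - 1) + 1 ≠ 0 := fun h ↦ h6' (by linear_combination (x + 1) * (x ^ 3 - 1) * h)
  field_simp
  ring

lemma riemannZeta_natCast_eulerProduct_hasProd {n : ℕ} (hn : 1 < n) :
    HasProd (fun p : Nat.Primes ↦ (1 - ((p : ℂ) ^ n)⁻¹)⁻¹) (riemannZeta n) := by
  simpa [Complex.cpow_neg] using riemannZeta_eulerProduct_hasProd (s := n) (by simpa using hn)

theorem moebius_series_zeta :
    Summable (fun k : ℕ => |(ArithmeticFunction.moebius k : ℝ) / (k : ℝ) ^ 2 *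
        ∏ p ∈ k.primeFactors, (1 + ((p : ℝ) - 1) / ((p : ℝ) ^ 2 - p + 1))|) ∧
      ((∑' k : ℕ, (ArithmeticFunction.moebius k : ℝ) / (k : ℝ) ^ 2 *
        ∏ p ∈ k.primeFactors, (1 + ((p : ℝ) - 1) / ((p : ℝ) ^ 2 - p + 1)) : ℝ) : ℂ) =
        riemannZeta 6 / (riemannZeta 2 * riemannZeta 3) := by
  refine ⟨summable_abs_titchmarshTerm, ?_⟩
  change ((∑' k, titchmarshTerm k : ℝ) : ℂ) = _
  have h_prod := ((riemannZeta_natCast_eulerProduct_hasProd (n := 2) (by norm_num)).mul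
    (riemannZeta_natCast_eulerProduct_hasProd (n := 3) (by norm_num))).mul
    titchmarshTerm_eulerProduct_hasProd
  have h_factor (p : Nat.Primes) : (p : ℂ) ≠ 0 ∧ (p : ℂ) ^ 6 ≠ 1 := by
    have h : (p : ℕ) ≠ 0 ∧ (p : ℕ) ^ 6 ≠ 1 :=
      ⟨p.prop.ne_zero, (Nat.one_lt_pow (by norm_num) p.prop.one_lt).ne'⟩
    exact_mod_cast h
  simp_rw [euler_factor_identity_two_three_six (h_factor _).1 (h_factor _).2] at h_prod
  have h_zeta := h_prod.unique (riemannZeta_natCast_eulerProduct_hasProd (n := 6) (by norm_num))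
  push_cast at h_zeta
  have hz2 : riemannZeta 2 ≠ 0 := riemannZeta_ne_zero_of_one_lt_re (by norm_num)
  have hz3 : riemannZeta 3 ≠ 0 := riemannZeta_ne_zero_of_one_lt_re (by norm_num)
  rw [Complex.ofReal_tsum, ← h_zeta]
  field_simp
end
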